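/- arXiv:2510.02273 — 2 statements merged into one kernel-verified Lean document; each statement's English description precedes it below -/
import Mathlib

section
/- Let h : ℚ_p → ℂ be given by h(x) = |x|_p^{λ-1} · φ(x) where λ > 1 and φ is a locally constant function whose support is contained in a compact open subset of ℚ_p. Then the Fourier transform ĥ(y) = ∫_{ℚ_p} h(x) ψ(xy) dx (for a nontrivial additive character ψ of ℚ_p) satisfies ĥ(y) = O(|y|_p^{-λ}) as |y|_p → ∞. -/
/-!
Pick `c₀` with `ψ c₀ ≠ 1` and put `c = c₀ / y`, so `‖c‖ = ‖c₀‖ / ‖y‖` is small for large `‖y‖`.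
Off the ball `‖x‖ ≤ ‖c‖`, translation by `c` preserves `‖x‖` (ultrametric inequality) and,
once `‖c‖` is below the scale of uniform local constancy of `φ`, also `φ x`; it multiplies
`ψ (x * y)` by `ψ c₀ ≠ 1`, so by translation invariance of `μ` that part of the integral
vanishes. On the ball the integrand is `O(‖c‖ ^ (λ - 1))` and the ball has measure `O(‖c‖)`.
-/

open MeasureTheory Metric

theorem IsLocallyConstant.exists_pos_forall_dist_le_eq {X Y : Type*} [PseudoMetricSpace X]
    [Zero Y] {φ : X → Y} (hφ : IsLocallyConstant φ) (hcs : HasCompactSupport φ) :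
    ∃ δ > 0, ∀ x y, dist x y ≤ δ → φ x = φ y := by
  obtain ⟨δ, hδ, hcov⟩ := lebesgue_number_lemma_of_metric (c := fun z => φ ⁻¹' {φ z}) hcs
    (fun z => hφ {φ z}) (fun x _ => Set.mem_iUnion.2 ⟨x, rfl⟩)
  have eq_of_mem_tsupport : ∀ x y, x ∈ tsupport φ → dist y x < δ → φ y = φ x := by
    intro x y hx hxy
    obtain ⟨z, hz⟩ := hcov x hx
    exact (hz hxy).trans (hz (mem_ball_self hδ)).symm
  refine ⟨δ / 2, half_pos hδ, fun x y hxy => ?_⟩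
  have hxy' : dist x y < δ := by linarith
  by_cases hx : x ∈ tsupport φ
  · exact (eq_of_mem_tsupport x y hx (by rwa [dist_comm])).symm
  by_cases hy : y ∈ tsupport φ
  · exact eq_of_mem_tsupport y x hy hxy'
  rw [image_eq_zero_of_notMem_tsupport hx, image_eq_zero_of_notMem_tsupport hy]

theorem integral_eq_zero_of_add_left_eq_mul {G : Type*} [AddGroup G] [MeasurableSpace G]
    [MeasurableAdd G] {μ : Measure G} [μ.IsAddLeftInvariant] {F : G → ℂ} {c : G} {w : ℂ}
    (hw : w ≠ 1) (hF : ∀ x, F (c + x) = w * F x) : ∫ x, F x ∂μ = 0 := by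
  have h : ∫ x, F x ∂μ = w * ∫ x, F x ∂μ := by
    conv_lhs => rw [← integral_add_left_eq_self F c]
    simp_rw [hF]
    exact integral_const_mul w F
  rcases mul_eq_zero.mp (show (w - 1) * ∫ x, F x ∂μ = 0 by linear_combination -h) with h1 | h1
  · exact absurd (sub_eq_zero.mp h1) hw
  · exact h1

theorem IsUltrametricDist.norm_add_eq_of_norm_lt {G : Type*} [SeminormedAddGroup G]
    [IsUltrametricDist G] {c x : G} (h : ‖c‖ < ‖x‖) : ‖c + x‖ = ‖x‖ := by
  rw [norm_add_eq_max_of_norm_ne_norm h.ne, max_eq_right h.le]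

theorem setIntegral_compl_closedBall_eq_zero {G : Type*} [NormedAddCommGroup G]
    [IsUltrametricDist G] [MeasurableSpace G] [BorelSpace G] {μ : Measure G}
    [μ.IsAddLeftInvariant] {F : G → ℂ} {c : G} {w : ℂ} (hw : w ≠ 1)
    (hF : ∀ x, ‖c‖ < ‖x‖ → F (c + x) = w * F x) :
    ∫ x in (closedBall 0 ‖c‖)ᶜ, F x ∂μ = 0 := by
  rw [← integral_indicator measurableSet_closedBall.compl]
  refine integral_eq_zero_of_add_left_eq_mul (c := c) hw fun x => ?_
  by_cases hx : ‖c‖ < ‖x‖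
  · have hcx := IsUltrametricDist.norm_add_eq_of_norm_lt hx
    simp [Set.indicator, hcx, hx, hF x hx]
  · have hcx : ‖c + x‖ ≤ ‖c‖ :=
      (IsUltrametricDist.norm_add_le_max _ _).trans (max_le le_rfl (not_lt.mp hx))
    simp [Set.indicator, hcx, hx]

theorem integrable_rpow_norm_mul_mul_addChar {R : Type*} [NormedRing R] [MeasurableSpace R]
    [OpensMeasurableSpace R] {μ : Measure R} [IsFiniteMeasureOnCompacts μ] {φ : R → ℂ}
    (hφ : Continuous φ) (hφcs : HasCompactSupport φ) {ψ : AddChar R ℂ} (hψ : Continuous ψ)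
    {s : ℝ} (hs : 0 < s) (y : R) :
    Integrable (fun x => ((‖x‖ ^ s : ℝ) : ℂ) * φ x * ψ (x * y)) μ :=
  Continuous.integrable_of_hasCompactSupport
    (((Complex.continuous_ofReal.comp (continuous_norm.rpow_const fun _ => Or.inr hs.le)).mul
      hφ).mul (hψ.comp (continuous_mul_const y))) hφcs.mul_left.mul_right

theorem setIntegral_compl_closedBall_rpow_norm_mul_mul_addChar_eq_zero {R : Type*}
    [NormedRing R] [IsUltrametricDist R] [MeasurableSpace R] [BorelSpace R] {μ : Measure R}
    [μ.IsAddLeftInvariant] {φ : R → ℂ} {ψ : AddChar R ℂ} {c y : R}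
    (hφ : ∀ x, φ (c + x) = φ x) (hψ : ψ (c * y) ≠ 1) (s : ℝ) :
    ∫ x in (closedBall 0 ‖c‖)ᶜ, ((‖x‖ ^ s : ℝ) : ℂ) * φ x * ψ (x * y) ∂μ = 0 := by
  refine setIntegral_compl_closedBall_eq_zero hψ fun x hx => ?_
  rw [IsUltrametricDist.norm_add_eq_of_norm_lt hx, hφ, add_mul, AddChar.map_add_eq_mul]
  ring

namespace Padic

variable {p : ℕ} [hp : Fact p.Prime] [MeasurableSpace ℚ_[p]] [BorelSpace ℚ_[p]]
  (μ : Measure ℚ_[p]) [μ.IsAddHaarMeasure]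

theorem pow_mul_measure_closedBall_le (n : ℕ) :
    (p : ENNReal) ^ n * μ (closedBall 0 ((p : ℝ) ^ n)⁻¹) ≤ μ (closedBall 0 1) := by
  set r : ℝ := ((p : ℝ) ^ n)⁻¹
  have hr : r ≤ 1 := inv_le_one_of_one_le₀ (one_le_pow₀ (by exact_mod_cast hp.out.one_le))
  have hdisj : (Finset.range (p ^ n) : Set ℕ).PairwiseDisjoint
      (fun k : ℕ => closedBall (k : ℚ_[p]) r) := by
    intro k hk l hl hkl
    refine (IsUltrametricDist.closedBall_eq_or_disjoint _ _ _).resolve_left fun heq => hkl ?_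
    have hlk : ‖(((l : ℤ) - k : ℤ) : ℚ_[p])‖ ≤ (p : ℝ) ^ (-n : ℤ) := by
      have := heq ▸ mem_closedBall_self (x := (l : ℚ_[p])) (inv_nonneg.2 (by positivity))
      simpa [dist_eq_norm, r] using this
    have := Int.eq_zero_of_abs_lt_dvd ((norm_int_le_pow_iff_dvd _ _).1 hlk) ?_
    · omega
    have hk' : (k : ℤ) < (p : ℤ) ^ n := by exact_mod_cast Finset.mem_range.1 hk
    have hl' : (l : ℤ) < (p : ℤ) ^ n := by exact_mod_cast Finset.mem_range.1 hl
    rw [abs_lt]; constructor <;> omega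
  calc (p : ENNReal) ^ n * μ (closedBall 0 r)
      = ∑ k ∈ Finset.range (p ^ n), μ (closedBall (k : ℚ_[p]) r) := by
        simp [Measure.addHaar_closedBall_center]
    _ = μ (⋃ k ∈ Finset.range (p ^ n), closedBall (k : ℚ_[p]) r) :=
        (measure_biUnion_finset hdisj fun _ _ => measurableSet_closedBall).symm
    _ ≤ μ (closedBall 0 1) := by
        refine measure_mono (Set.iUnion₂_subset fun k _ => ?_)
        refine (closedBall_subset_closedBall hr).trans
          (IsUltrametricDist.closedBall_eq_of_mem ?_).subset
        simpa using norm_int_le_one (p := p) k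

theorem measureReal_closedBall_norm_le {c : ℚ_[p]} (hc : c ≠ 0) (hc1 : ‖c‖ ≤ 1) :
    μ.real (closedBall 0 ‖c‖) ≤ ‖c‖ * μ.real (closedBall 0 1) := by
  obtain ⟨n, hn⟩ := Int.eq_ofNat_of_zero_le ((norm_le_one_iff_val_nonneg c).1 hc1)
  have hnorm : ‖c‖ = ((p : ℝ) ^ n)⁻¹ := by
    rw [norm_eq_zpow_neg_valuation hc, hn, zpow_neg, zpow_natCast]
  have hpn : (0 : ℝ) < (p : ℝ) ^ n := by have := hp.out.pos; positivity
  have h := ENNReal.toReal_mono measure_closedBall_lt_top.ne (pow_mul_measure_closedBall_le μ n)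
  rw [ENNReal.toReal_mul, ENNReal.toReal_pow, ENNReal.toReal_natCast, ← measureReal_def,
    ← measureReal_def, ← hnorm] at h
  rw [hnorm, inv_mul_eq_div, le_div_iff₀' hpn, ← hnorm]
  exact h

theorem norm_setIntegral_closedBall_le {F : ℚ_[p] → ℂ} {c : ℚ_[p]} (hc : c ≠ 0) (hc1 : ‖c‖ ≤ 1)
    {M s : ℝ} (hs : 0 ≤ s) (hF : ∀ x ∈ closedBall 0 ‖c‖, ‖F x‖ ≤ M * ‖x‖ ^ s) :
    ‖∫ x in closedBall 0 ‖c‖, F x ∂μ‖ ≤ M * μ.real (closedBall 0 1) * ‖c‖ ^ (s + 1) := by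
  have hc0 : 0 < ‖c‖ := norm_pos_iff.2 hc
  have hM : 0 ≤ M := nonneg_of_mul_nonneg_left
    ((norm_nonneg _).trans (hF c (by simp))) (by positivity)
  calc ‖∫ x in closedBall 0 ‖c‖, F x ∂μ‖
      ≤ M * ‖c‖ ^ s * μ.real (closedBall 0 ‖c‖) :=
        norm_setIntegral_le_of_norm_le_const measure_closedBall_lt_top fun x hx =>
          (hF x hx).trans (by gcongr; simpa using hx)
    _ ≤ M * ‖c‖ ^ s * (‖c‖ * μ.real (closedBall 0 1)) := by
        gcongr; exact measureReal_closedBall_norm_le μ hc hc1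
    _ = M * μ.real (closedBall 0 1) * ‖c‖ ^ (s + 1) := by
        rw [Real.rpow_add_one hc0.ne']; ring

theorem norm_setIntegral_closedBall_rpow_norm_mul_mul_addChar_le {φ : ℚ_[p] → ℂ}
    {ψ : AddChar ℚ_[p] ℂ} {c y : ℚ_[p]} (hc : c ≠ 0) (hc1 : ‖c‖ ≤ 1) {Mφ Mψ s : ℝ}
    (hMφ : ∀ x, ‖φ x‖ ≤ Mφ) (hMψ : ∀ z ∈ closedBall 0 ‖c * y‖, ‖ψ z‖ ≤ Mψ) (hs : 0 ≤ s) :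
    ‖∫ x in closedBall 0 ‖c‖, ((‖x‖ ^ s : ℝ) : ℂ) * φ x * ψ (x * y) ∂μ‖ ≤
      Mφ * Mψ * μ.real (closedBall 0 1) * ‖c‖ ^ (s + 1) := by
  refine norm_setIntegral_closedBall_le μ hc hc1 hs fun x hx => ?_
  have hxy : x * y ∈ closedBall 0 ‖c * y‖ := by
    rw [mem_closedBall_zero_iff, norm_mul, norm_mul]
    gcongr
    simpa using hx
  have hMφ0 : 0 ≤ Mφ := (norm_nonneg _).trans (hMφ 0)
  rw [norm_mul, norm_mul, Complex.norm_real, Real.norm_of_nonneg (by positivity)]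
  calc _ ≤ ‖x‖ ^ s * Mφ * Mψ := by gcongr; exacts [hMφ x, hMψ _ hxy]
    _ = _ := by ring

end Padic

/-- let `h(x) = |x|_p^{λ-1} φ(x)` on `ℚ_p` with `λ > 1` and `φ` locally
constant with support contained in a compact open set. Then for a nontrivial continuous
additive character `ψ` of `ℚ_p` and a Haar measure `μ`, the Fourier transform
`ĥ(y) = ∫ h(x) ψ(xy) dμ(x)` is `O(|y|_p^{-λ})` as `|y|_p → ∞`. -/
theorem fourier_decay_padic (p : ℕ) [Fact p.Prime]
    [MeasurableSpace ℚ_[p]] [BorelSpace ℚ_[p]]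
    (μ : Measure ℚ_[p]) [μ.IsAddHaarMeasure]
    (ψ : AddChar ℚ_[p] ℂ) (hψc : Continuous ψ) (hψ : ψ ≠ 1)
    (φ : ℚ_[p] → ℂ) (hφ : IsLocallyConstant φ)
    (hsupp : ∃ Ω : Set ℚ_[p], IsCompact Ω ∧ IsOpen Ω ∧ Function.support φ ⊆ Ω)
    (lam : ℝ) (hlam : 1 < lam)
    (h : ℚ_[p] → ℂ) (hh : ∀ x : ℚ_[p], h x = ((‖x‖ ^ (lam - 1) : ℝ) : ℂ) * φ x) :
    ∃ C R : ℝ, ∀ y : ℚ_[p], R ≤ ‖y‖ →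
      ‖∫ x : ℚ_[p], h x * ψ (x * y) ∂μ‖ ≤ C * ‖y‖ ^ (-lam) := by
  obtain rfl : h = fun x => ((‖x‖ ^ (lam - 1) : ℝ) : ℂ) * φ x := funext hh
  obtain ⟨Ω, hΩ, -, hφΩ⟩ := hsupp
  have hφcs : HasCompactSupport φ :=
    hΩ.of_isClosed_subset isClosed_closure (closure_minimal hφΩ hΩ.isClosed)
  obtain ⟨δ, hδ, hφδ⟩ := hφ.exists_pos_forall_dist_le_eq hφcs
  obtain ⟨c₀, hc₀⟩ := AddChar.ne_one_iff.mp hψ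
  have hc₀0 : c₀ ≠ 0 := by rintro rfl; exact hc₀ ψ.map_zero_eq_one
  obtain ⟨Mφ, hMφ⟩ := hφcs.exists_bound_of_continuous hφ.continuous
  obtain ⟨Mψ, hMψ⟩ :=
    (isCompact_closedBall (0 : ℚ_[p]) ‖c₀‖).exists_bound_of_continuousOn hψc.continuousOn
  refine ⟨Mφ * Mψ * μ.real (closedBall 0 1) * ‖c₀‖ ^ lam, ‖c₀‖ / min δ 1, fun y hy => ?_⟩
  have hy0 : y ≠ 0 := norm_pos_iff.1 <|
    (div_pos (norm_pos_iff.2 hc₀0) (lt_min hδ one_pos)).trans_le hy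
  set c := c₀ * y⁻¹
  have hcy : c * y = c₀ := inv_mul_cancel_right₀ hy0 c₀
  have hc : ‖c‖ ≤ min δ 1 := by
    rw [norm_mul, norm_inv, ← div_eq_mul_inv, div_le_iff₀ (norm_pos_iff.2 hy0)]
    rwa [div_le_iff₀ (lt_min hδ one_pos), mul_comm] at hy
  rw [← integral_add_compl measurableSet_closedBall
      (integrable_rpow_norm_mul_mul_addChar hφ.continuous hφcs hψc (by linarith) y),
    setIntegral_compl_closedBall_rpow_norm_mul_mul_addChar_eq_zero
      (fun x => hφδ _ _ (by simpa using hc.trans (min_le_left _ _))) (hcy ▸ hc₀), add_zero]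
  calc _ ≤ Mφ * Mψ * μ.real (closedBall 0 1) * ‖c‖ ^ (lam - 1 + 1) :=
        Padic.norm_setIntegral_closedBall_rpow_norm_mul_mul_addChar_le μ
          (mul_ne_zero hc₀0 (inv_ne_zero hy0)) (hc.trans (min_le_right _ _)) hMφ
          (by rwa [hcy]) (by linarith)
    _ = Mφ * Mψ * μ.real (closedBall 0 1) * ‖c₀‖ ^ lam * ‖y‖ ^ (-lam) := by
        rw [sub_add_cancel, norm_mul, norm_inv, Real.mul_rpow (norm_nonneg _)
          (inv_nonneg.2 (norm_nonneg _)), Real.inv_rpow (norm_nonneg _),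
          Real.rpow_neg (norm_nonneg _)]
        ring
end

section
/- Let F : ℝ → ℂ be a Schwartz function and define z(F, s) = ∫_ℝ F(x)|x|^{s} dx for Re(s) > -1. Then s ↦ z(F, s) extends to a meromorphic function on ℂ, holomorphic on Re(s) > -1, with at most simple poles at s = -1, -3, -5, …; at s = -1 the residue is 2F(0). -/
/-!
Subtracting from `f` its Taylor polynomial of degree `< N` on `(0, 1]` leaves a function that is
`O(t ^ N)` at `0` and still decays rapidly, so its Mellin transform is holomorphic on
`Re s > -N`; the subtracted monomials contribute `∫₀¹ tⁿ t^(s-1) dt = 1 / (s + n)`.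
Since `z(F, s) = 𝓜 F (s + 1) + 𝓜 (F ∘ neg) (s + 1)` for the Mellin transform `𝓜`, this
writes `z(F, s)` on `Re s > -N - 1` as a holomorphic function plus
`∑_{n<N} (1 + (-1)ⁿ) F⁽ⁿ⁾(0) / n! / (s + n + 1)`: the odd terms cancel and the even ones are
simple poles with residue `2 F⁽ⁿ⁾(0) / n!`. The continuations for different `N` agree where
both are defined, so they patch to one function on `ℂ`.
-/

open MeasureTheory Filter

open Set Complex Asymptotics Topology
open scoped Nat ContDiff

noncomputable section

namespace ZetaIntegral

section HalfLine

variable {f : ℝ → ℂ} {N : ℕ} {s : ℂ}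

def taylorCoeff (f : ℝ → ℂ) (n : ℕ) : ℂ := iteratedDeriv n f 0 / n !

def taylorPoly (f : ℝ → ℂ) (N : ℕ) (x : ℝ) : ℂ :=
  ∑ n ∈ Finset.range N, taylorCoeff f n * (x : ℂ) ^ n

def taylorRemainderIoc (f : ℝ → ℂ) (N : ℕ) (t : ℝ) : ℂ :=
  f t - (Ioc 0 1).indicator (taylorPoly f N) t

@[simp]
lemma taylorRemainderIoc_zero (f : ℝ → ℂ) : taylorRemainderIoc f 0 = f := by
  ext t
  simp [taylorRemainderIoc, taylorPoly]

lemma taylorPoly_succ_eq_taylorWithinEval (f : ℝ → ℂ) (N : ℕ) (x : ℝ) :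
    taylorPoly f (N + 1) x = taylorWithinEval f N univ 0 x := by
  simp [taylorPoly, taylor_within_apply, taylorCoeff, iteratedDerivWithin_univ, div_eq_inv_mul,
    mul_comm, mul_assoc]

lemma sub_taylorPoly_isBigO (hf : ContDiff ℝ N f) :
    (fun x => f x - taylorPoly f N x) =O[𝓝 0] (fun x : ℝ => x ^ N) := by
  have hlead : (fun x : ℝ => taylorCoeff f N * (x : ℂ) ^ N) =O[𝓝 0] (fun x : ℝ => x ^ N) :=
    .const_mul_left (isBigO_of_le _ fun x => by simp) _
  have htaylor := (taylor_isLittleO_univ (x₀ := 0) hf).isBigO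
  simp only [sub_zero] at htaylor
  refine (htaylor.add hlead).congr_left fun x => ?_
  rw [← taylorPoly_succ_eq_taylorWithinEval, taylorPoly, Finset.sum_range_succ, ← taylorPoly]
  ring

lemma taylorRemainderIoc_isBigO_nhdsGT (hf : ContDiff ℝ N f) :
    taylorRemainderIoc f N =O[𝓝[>] 0] (fun t : ℝ => t ^ (N : ℝ)) := by
  have hIoc : Ioc (0 : ℝ) 1 ∈ 𝓝[>] 0 := Ioc_mem_nhdsGT one_pos
  refine ((sub_taylorPoly_isBigO hf).mono nhdsWithin_le_nhds).congr' ?_ ?_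
  · filter_upwards [hIoc] with t ht
    rw [taylorRemainderIoc, indicator_of_mem ht]
  · exact .of_forall fun t => (Real.rpow_natCast t N).symm

lemma taylorRemainderIoc_isBigO_atTop {g : ℝ → ℝ} (hf : f =O[atTop] g) :
    taylorRemainderIoc f N =O[atTop] g := by
  refine hf.congr' ?_ .rfl
  filter_upwards [eventually_gt_atTop 1] with t ht
  rw [taylorRemainderIoc, indicator_of_notMem fun h => ht.not_ge h.2, sub_zero]

lemma continuous_taylorPoly (f : ℝ → ℂ) (N : ℕ) : Continuous (taylorPoly f N) := by
  unfold taylorPoly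
  fun_prop

lemma locallyIntegrableOn_taylorRemainderIoc (hf : Continuous f) :
    LocallyIntegrableOn (taylorRemainderIoc f N) (Ioi 0) := by
  have hpoly : Integrable ((Ioc 0 1).indicator (taylorPoly f N)) :=
    ((continuous_taylorPoly f N).integrableOn_Icc.mono_set Ioc_subset_Icc_self)
      |>.integrable_indicator measurableSet_Ioc
  exact (hf.locallyIntegrable.sub hpoly.locallyIntegrable).locallyIntegrableOn _

lemma hasMellin_indicator_pow (n : ℕ) (hs : -n < s.re) :
    HasMellin ((Ioc 0 1).indicator fun t : ℝ => (t : ℂ) ^ n) s (1 / (s + n)) := by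
  simpa [cpow_natCast] using hasMellin_cpow_Ioc (n : ℂ) (s := s) (by rw [natCast_re]; linarith)

lemma taylorRemainderIoc_eq_succ_add (f : ℝ → ℂ) (N : ℕ) :
    taylorRemainderIoc f N = fun t => taylorRemainderIoc f (N + 1) t +
      taylorCoeff f N • (Ioc 0 1).indicator (fun t : ℝ => (t : ℂ) ^ N) t := by
  ext t
  by_cases ht : t ∈ Ioc 0 1
  · simp only [taylorRemainderIoc, taylorPoly, indicator_of_mem ht, Finset.sum_range_succ,
      smul_eq_mul]
    ring
  · simp [taylorRemainderIoc, ht]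

def regMellin (f : ℝ → ℂ) (N : ℕ) (s : ℂ) : ℂ :=
  mellin (taylorRemainderIoc f N) s + ∑ n ∈ Finset.range N, taylorCoeff f n / (s + n)

@[simp]
lemma regMellin_zero (f : ℝ → ℂ) (s : ℂ) : regMellin f 0 s = mellin f s := by
  simp [regMellin]

variable (hf : ContDiff ℝ ∞ f) (hdecay : ∀ a : ℝ, f =O[atTop] (· ^ a))
include hf hdecay

theorem mellinConvergent_taylorRemainderIoc (hs : -N < s.re) :
    MellinConvergent (taylorRemainderIoc f N) s :=
  mellinConvergent_of_isBigO_rpow (b := -N) (locallyIntegrableOn_taylorRemainderIoc hf.continuous)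
    (taylorRemainderIoc_isBigO_atTop (hdecay _)) (lt_add_one s.re)
    (by simpa using taylorRemainderIoc_isBigO_nhdsGT (contDiff_infty.1 hf N))
    (by simpa using hs)

theorem analyticAt_mellin_taylorRemainderIoc (hs : -N < s.re) :
    AnalyticAt ℂ (mellin (taylorRemainderIoc f N)) s := by
  refine DifferentiableOn.analyticAt (fun z (hz : -N < z.re) => ?_)
    ((isOpen_lt continuous_const continuous_re).mem_nhds hs)
  exact (mellin_differentiableAt_of_isBigO_rpow (b := -N)
    (locallyIntegrableOn_taylorRemainderIoc hf.continuous)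
    (taylorRemainderIoc_isBigO_atTop (hdecay _)) (lt_add_one z.re)
    (by simpa using taylorRemainderIoc_isBigO_nhdsGT (contDiff_infty.1 hf N))
    (by simpa using hz)).differentiableWithinAt

theorem regMellin_succ (hs : -N < s.re) : regMellin f N s = regMellin f (N + 1) s := by
  have hpow := hasMellin_indicator_pow N hs
  have hsplit := hasMellin_add (mellinConvergent_taylorRemainderIoc hf hdecay
    (s := s) (N := N + 1) (by push_cast; linarith)) (hpow.1.const_smul (taylorCoeff f N))
  rw [regMellin, regMellin, taylorRemainderIoc_eq_succ_add, hsplit.2, mellin_const_smul, hpow.2,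
    Finset.sum_range_succ, smul_eq_mul]
  ring

theorem regMellin_eq_of_le {M : ℕ} (hNM : N ≤ M) (hs : -N < s.re) :
    regMellin f N s = regMellin f M s := by
  induction M, hNM using Nat.le_induction with
  | base => rfl
  | succ M hNM ih =>
    rw [ih, regMellin_succ hf hdecay]
    exact lt_of_le_of_lt (by simpa using hNM) hs

end HalfLine

section WholeLine

lemma integrableOn_Iic_of_integrableOn_Ioi_comp_neg {E : Type*} [NormedAddCommGroup E]
    {k : ℝ → E} (h : IntegrableOn (fun x => k (-x)) (Ioi 0)) : IntegrableOn k (Iic 0) := by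
  rw [← (Measure.measurePreserving_neg volume).integrableOn_comp_preimage
    (Homeomorph.neg ℝ).measurableEmbedding]
  simpa [Function.comp_def, integrableOn_Ici_iff_integrableOn_Ioi] using h

lemma integral_eq_integral_Ioi_add_integral_Ioi_comp_neg {E : Type*} [NormedAddCommGroup E]
    [NormedSpace ℝ E] {k : ℝ → E} (hpos : IntegrableOn k (Ioi 0))
    (hneg : IntegrableOn (fun x => k (-x)) (Ioi 0)) :
    ∫ x, k x = (∫ x in Ioi 0, k x) + ∫ x in Ioi 0, k (-x) := by
  have hsplit := setIntegral_union (Iic_disjoint_Ioi le_rfl) measurableSet_Ioi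
    (integrableOn_Iic_of_integrableOn_Ioi_comp_neg hneg) hpos
  rw [Iic_union_Ioi, setIntegral_univ] at hsplit
  rw [hsplit, integral_comp_neg_Ioi, neg_zero, add_comm]

lemma mul_abs_cpow_eqOn (h : ℝ → ℂ) (s : ℂ) :
    EqOn (fun x : ℝ => h x * ((|x| : ℝ) : ℂ) ^ s) (fun t : ℝ => (t : ℂ) ^ (s + 1 - 1) • h t)
      (Ioi 0) := fun x hx => by
  simp [abs_of_pos (show (0 : ℝ) < x from hx), mul_comm]

variable {h : ℝ → ℂ} {s : ℂ}

theorem integrable_mul_abs_cpow (hpos : MellinConvergent h (s + 1))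
    (hneg : MellinConvergent (fun x => h (-x)) (s + 1)) :
    Integrable fun x : ℝ => h x * ((|x| : ℝ) : ℂ) ^ s := by
  rw [← integrableOn_univ, ← Iic_union_Ioi (a := 0)]
  refine .union (integrableOn_Iic_of_integrableOn_Ioi_comp_neg ?_)
    ((integrableOn_congr_fun (mul_abs_cpow_eqOn h s) measurableSet_Ioi).2 hpos)
  simpa using (integrableOn_congr_fun (mul_abs_cpow_eqOn _ s) measurableSet_Ioi).2 hneg

theorem integral_mul_abs_cpow (hpos : MellinConvergent h (s + 1))
    (hneg : MellinConvergent (fun x => h (-x)) (s + 1)) :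
    ∫ x : ℝ, h x * ((|x| : ℝ) : ℂ) ^ s = mellin h (s + 1) + mellin (fun x => h (-x)) (s + 1) := by
  rw [integral_eq_integral_Ioi_add_integral_Ioi_comp_neg
    ((integrableOn_congr_fun (mul_abs_cpow_eqOn h s) measurableSet_Ioi).2 hpos)
    (by simpa using (integrableOn_congr_fun (mul_abs_cpow_eqOn _ s) measurableSet_Ioi).2 hneg)]
  simp only [abs_neg, mellin]
  congr 1 <;> exact setIntegral_congr_fun measurableSet_Ioi (mul_abs_cpow_eqOn _ s)

end WholeLine

section Continuation

lemma isBigO_atTop_comp_of_isBigO_cocompact {f : ℝ → ℂ} {a : ℝ}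
    (hf : f =O[cocompact ℝ] (‖·‖ ^ a)) {g : ℝ → ℝ} (hg : Tendsto g atTop (cocompact ℝ))
    (hg_norm : ∀ t, ‖g t‖ = ‖t‖) : (fun t => f (g t)) =O[atTop] (· ^ a) := by
  refine (hf.comp_tendsto hg).congr' .rfl ?_
  filter_upwards [eventually_ge_atTop 0] with t ht
  show ‖g t‖ ^ a = t ^ a
  rw [hg_norm, Real.norm_of_nonneg ht]

lemma taylorCoeff_comp_neg (f : ℝ → ℂ) (n : ℕ) :
    taylorCoeff (fun x => f (-x)) n = (-1) ^ n * taylorCoeff f n := by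
  simp [taylorCoeff, iteratedDeriv_comp_neg, mul_div_assoc]

def zetaReg (F : ℝ → ℂ) (N : ℕ) (s : ℂ) : ℂ :=
  regMellin F N (s + 1) + regMellin (fun x => F (-x)) N (s + 1)

def zetaRemainder (F : ℝ → ℂ) (N : ℕ) (s : ℂ) : ℂ :=
  mellin (taylorRemainderIoc F N) (s + 1) +
    mellin (taylorRemainderIoc (fun x => F (-x)) N) (s + 1)

lemma zetaReg_eq (F : ℝ → ℂ) (N : ℕ) (s : ℂ) :
    zetaReg F N s = zetaRemainder F N s +
      ∑ n ∈ Finset.range N, (1 + (-1) ^ n) * taylorCoeff F n / (s + (1 + n)) := by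
  rw [zetaReg, zetaRemainder, regMellin, regMellin, add_add_add_comm, ← Finset.sum_add_distrib]
  congr 1
  refine Finset.sum_congr rfl fun n _ => ?_
  rw [taylorCoeff_comp_neg, add_assoc]
  ring

lemma tendsto_add_mul_div_add (a c d : ℂ) :
    Tendsto (fun s => (s + c) * (a / (s + d))) (𝓝[≠] (-c)) (𝓝 (if d = c then a else 0)) := by
  split_ifs with hdc
  · subst hdc
    refine tendsto_const_nhds.congr' ?_
    filter_upwards [self_mem_nhdsWithin] with s hs
    have : s + d ≠ 0 := fun h => hs (eq_neg_of_add_eq_zero_left h)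
    field_simp
  · have : -c + d ≠ 0 := fun h => hdc (by linear_combination h)
    have hcont : ContinuousAt (fun s => (s + c) * (a / (s + d))) (-c) := by
      fun_prop (disch := assumption)
    simpa using hcont.tendsto.mono_left nhdsWithin_le_nhds

def zetaCont (F : ℝ → ℂ) (s : ℂ) : ℂ := zetaReg F ⌈-s.re⌉₊ s

lemma re_neg_two_mul_add_one (k : ℕ) : (-(2 * k + 1 : ℂ)).re = -(2 * k + 1) := by
  simp

variable {F : ℝ → ℂ} (hdecay : ∀ a : ℝ, F =O[cocompact ℝ] (‖·‖ ^ a))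
include hdecay

lemma isBigO_atTop_rpow (a : ℝ) : F =O[atTop] (· ^ a) :=
  isBigO_atTop_comp_of_isBigO_cocompact (hdecay a) (tendsto_id.mono_right atTop_le_cocompact)
    fun _ => rfl

lemma isBigO_atTop_rpow_comp_neg (a : ℝ) : (fun x => F (-x)) =O[atTop] (· ^ a) :=
  isBigO_atTop_comp_of_isBigO_cocompact (hdecay a)
    (tendsto_neg_atTop_atBot.mono_right atBot_le_cocompact) norm_neg

variable (hF : ContDiff ℝ ∞ F)
include hF

lemma zetaReg_eq_of_le {N M : ℕ} (hNM : N ≤ M) {s : ℂ} (hs : -N < s.re + 1) :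
    zetaReg F N s = zetaReg F M s := by
  have hs' : -N < (s + 1).re := by simpa using hs
  rw [zetaReg, zetaReg, regMellin_eq_of_le hF (isBigO_atTop_rpow hdecay) hNM hs',
    regMellin_eq_of_le (f := fun x => F (-x)) (hF.comp contDiff_neg)
      (isBigO_atTop_rpow_comp_neg hdecay) hNM hs']

lemma analyticAt_zetaRemainder {N : ℕ} {s : ℂ} (hs : -N < s.re + 1) :
    AnalyticAt ℂ (zetaRemainder F N) s := by
  have hs' : -N < (s + 1).re := by simpa using hs
  refine .fun_add ?_ ?_
  · exact .fun_comp (f := (· + 1))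
      (analyticAt_mellin_taylorRemainderIoc hF (isBigO_atTop_rpow hdecay) hs') (by fun_prop)
  · exact .fun_comp (f := (· + 1)) (analyticAt_mellin_taylorRemainderIoc (f := fun x => F (-x))
      (hF.comp contDiff_neg) (isBigO_atTop_rpow_comp_neg hdecay) hs') (by fun_prop)

lemma analyticAt_zetaReg {N : ℕ} {s : ℂ} (hs : -N < s.re + 1)
    (hpole : ∀ k : ℕ, s ≠ -(2 * k + 1)) : AnalyticAt ℂ (zetaReg F N) s := by
  simp_rw [funext (zetaReg_eq F N)]
  refine (analyticAt_zetaRemainder hdecay hF hs).add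
    (Finset.analyticAt_fun_sum _ fun n _ => ?_)
  rcases Nat.even_or_odd n with ⟨k, rfl⟩ | hodd
  · refine analyticAt_const.div (by fun_prop) fun h => hpole k ?_
    push_cast at h
    linear_combination h
  · simp [hodd.neg_one_pow, analyticAt_const]

lemma tendsto_zetaReg {N k : ℕ} (hk : 2 * k < N) :
    Tendsto (fun s => (s + (2 * k + 1)) * zetaReg F N s) (𝓝[≠] (-(2 * k + 1)))
      (𝓝 (2 * taylorCoeff F (2 * k))) := by
  set c : ℂ := 2 * k + 1 with hc
  have hs : -N < (-c).re + 1 := by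
    rw [hc, re_neg_two_mul_add_one]
    linarith [show (2 * k : ℝ) < N by exact_mod_cast hk]
  have hregular : Tendsto (fun s => (s + c) * zetaRemainder F N s) (𝓝[≠] (-c)) (𝓝 0) := by
    have hcont : ContinuousAt (fun s => (s + c) * zetaRemainder F N s) (-c) :=
      (continuous_add_const c).continuousAt.mul (analyticAt_zetaRemainder hdecay hF hs).continuousAt
    simpa using hcont.tendsto.mono_left nhdsWithin_le_nhds
  have hpoles := tendsto_finsetSum (Finset.range N) fun n _ =>
    tendsto_add_mul_div_add ((1 + (-1) ^ n) * taylorCoeff F n) c (1 + n)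
  have hpole_iff : ∀ n : ℕ, (1 + n : ℂ) = c ↔ n = 2 * k := fun n => by
    rw [hc]; norm_cast; omega
  simp only [hpole_iff, Finset.sum_ite_eq', Finset.mem_range, hk, if_true,
    (even_two_mul k).neg_one_pow] at hpoles
  convert hregular.add hpoles using 2 with s
  · rw [zetaReg_eq, mul_add, Finset.mul_sum]
  · ring

lemma zetaCont_eventuallyEq (s : ℂ) : zetaCont F =ᶠ[𝓝 s] zetaReg F (⌈-s.re⌉₊ + 1) := by
  filter_upwards [(isOpen_lt continuous_const continuous_re).mem_nhds
    (show s.re - 1 < s.re by linarith)] with u (hu : s.re - 1 < u.re)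
  refine zetaReg_eq_of_le hdecay hF ?_ ?_
  · rw [Nat.ceil_le]
    push_cast
    linarith [Nat.le_ceil (-s.re)]
  · linarith [Nat.le_ceil (-u.re)]

theorem analyticAt_zetaCont {s : ℂ} (hpole : ∀ k : ℕ, s ≠ -(2 * k + 1)) :
    AnalyticAt ℂ (zetaCont F) s :=
  (analyticAt_zetaReg hdecay hF (by push_cast; linarith [Nat.le_ceil (-s.re)]) hpole).congr
    (zetaCont_eventuallyEq hdecay hF s).symm

theorem tendsto_zetaCont (k : ℕ) :
    Tendsto (fun s => (s + (2 * k + 1)) * zetaCont F s) (𝓝[≠] (-(2 * k + 1)))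
      (𝓝 (2 * taylorCoeff F (2 * k))) := by
  refine (tendsto_zetaReg hdecay hF (N := ⌈-(-(2 * k + 1) : ℂ).re⌉₊ + 1) ?_).congr' ?_
  · have hceil := Nat.le_ceil (-(-(2 * k + 1) : ℂ).re)
    rw [re_neg_two_mul_add_one, neg_neg] at hceil
    exact Nat.lt_succ_of_lt (by exact_mod_cast hceil)
  · filter_upwards [nhdsWithin_le_nhds (zetaCont_eventuallyEq hdecay hF _)] with s hs
    rw [hs]

theorem zetaCont_eq_integral {s : ℂ} (hs : -1 < s.re) :
    Integrable (fun x : ℝ => F x * ((|x| : ℝ) : ℂ) ^ s) ∧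
      zetaCont F s = ∫ x : ℝ, F x * ((|x| : ℝ) : ℂ) ^ s := by
  have hs' : -((0 : ℕ) : ℝ) < (s + 1).re := by simpa using show 0 < s.re + 1 by linarith
  have hpos := mellinConvergent_taylorRemainderIoc hF (isBigO_atTop_rpow hdecay) hs'
  have hneg := mellinConvergent_taylorRemainderIoc (f := fun x => F (-x)) (hF.comp contDiff_neg)
    (isBigO_atTop_rpow_comp_neg hdecay) hs'
  rw [taylorRemainderIoc_zero] at hpos hneg
  refine ⟨integrable_mul_abs_cpow hpos hneg, ?_⟩
  rw [integral_mul_abs_cpow hpos hneg, zetaCont,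
    ← zetaReg_eq_of_le hdecay hF (Nat.zero_le _) (by simpa using hs'), zetaReg, regMellin_zero,
    regMellin_zero]

end Continuation

end ZetaIntegral

end

open ZetaIntegral in
/-- for a Schwartz function `F : ℝ → ℂ`, `z(F,s) = ∫_ℝ F(x)|x|^s dx`
(convergent for `Re s > -1`) extends meromorphically to `ℂ`, analytic away from
`s = -1, -3, -5, …`, with at most simple poles there; at `s = -1` the residue is `2·F(0)`. -/
theorem zeta_integral_meromorphic (F : SchwartzMap ℝ ℂ) :
    ∃ Z : ℂ → ℂ,
      (∀ s : ℂ, -1 < s.re →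
        Integrable (fun x : ℝ => F x * (((|x| : ℝ) : ℂ) ^ s)) ∧
        Z s = ∫ x : ℝ, F x * (((|x| : ℝ) : ℂ) ^ s)) ∧
      (∀ s : ℂ, (∀ k : ℕ, s ≠ -(2 * (k : ℂ) + 1)) → AnalyticAt ℂ Z s) ∧
      (∀ k : ℕ, ∃ r : ℂ,
        Tendsto (fun s : ℂ => (s + (2 * (k : ℂ) + 1)) * Z s)
          (nhdsWithin (-(2 * (k : ℂ) + 1)) {(-(2 * (k : ℂ) + 1))}ᶜ) (nhds r)) ∧
      Tendsto (fun s : ℂ => (s + 1) * Z s)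
        (nhdsWithin (-1) {(-1 : ℂ)}ᶜ) (nhds (2 * F 0)) := by
  have hdecay := F.isBigO_cocompact_rpow
  have hF : ContDiff ℝ ∞ F := F.smooth ⊤
  refine ⟨zetaCont F, fun s hs => zetaCont_eq_integral hdecay hF hs,
    fun s hs => analyticAt_zetaCont hdecay hF hs, fun k => ⟨_, tendsto_zetaCont hdecay hF k⟩, ?_⟩
  simpa [taylorCoeff] using tendsto_zetaCont hdecay hF 0
end
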